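/- arXiv:math/0307055 — 2 statements merged into one kernel-verified Lean document; each statement's English description precedes it below -/
import Mathlib

section
/- Suppose f : ℝ² → 𝔽² preserves every distance d > 0 with d² rational. Then for all A, B, C, D ∈ ℝ² with B - A = D - C, one has f(B) - f(A) = f(D) - f(C); i.e., f preserves parallelogram (equal-vector) relations. -/
/-!
Write `|v|²` for `v.1² + v.2²`. Every plane vector is a sum of two vectors whose squared lengths
are positive rationals, so it suffices to show that `f` carries parallelograms with such sides to
parallelograms. One algebraic fact about the form `|·|²` over `𝔽`, which may be isotropic,
does this: if `|b|² ≠ 0`, `|e|² = 0` and `|b + e|² = |b|²`, then `e = 0`. Applied to the points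
`p, p + w, p + 2w` it shows that `f` maps equally spaced collinear triples to equally spaced ones;
applied to the three parallel segments `x → x + u`, `x + v → x + v + u`, `x + 2v → x + 2v + u`,
whose images are of the form `b, b + e, b + 2e` by the collinear case, it shows that the images
of opposite sides agree.
-/

def sqNorm {R : Type*} [CommRing R] (v : R × R) : R := v.1 ^ 2 + v.2 ^ 2

section SqNorm

variable {R : Type*} [CommRing R] [IsDomain R] [NeZero (2 : R)]

theorem eq_zero_of_sqNorm_add_eq {b e : R × R} (hb : sqNorm b ≠ 0) (he : sqNorm e = 0)
    (hbe : sqNorm (b + e) = sqNorm b) : e = 0 := by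
  simp only [sqNorm, Prod.fst_add, Prod.snd_add] at hb he hbe
  have hdot : b.1 * e.1 + b.2 * e.2 = 0 := by
    have h : 2 * (b.1 * e.1 + b.2 * e.2) = 0 := by linear_combination hbe - he
    exact (mul_eq_zero.mp h).resolve_left two_ne_zero
  have h₁ : (b.1 ^ 2 + b.2 ^ 2) * e.1 ^ 2 = 0 := by
    linear_combination (b.1 * e.1 - b.2 * e.2) * hdot + b.2 ^ 2 * he
  have h₂ : (b.1 ^ 2 + b.2 ^ 2) * e.2 ^ 2 = 0 := by
    linear_combination (b.2 * e.2 - b.1 * e.1) * hdot + b.1 ^ 2 * he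
  exact Prod.ext (pow_eq_zero_iff two_ne_zero |>.mp ((mul_eq_zero.mp h₁).resolve_left hb))
    (pow_eq_zero_iff two_ne_zero |>.mp ((mul_eq_zero.mp h₂).resolve_left hb))

theorem eq_zero_of_sqNorm_add_add_eq {b e : R × R} (hb : sqNorm b ≠ 0)
    (h₁ : sqNorm (b + e) = sqNorm b) (h₂ : sqNorm (b + e + e) = sqNorm b) : e = 0 := by
  refine eq_zero_of_sqNorm_add_eq hb ?_ h₁
  simp only [sqNorm, Prod.fst_add, Prod.snd_add] at h₁ h₂ ⊢
  have h : 2 * (e.1 ^ 2 + e.2 ^ 2) = 0 := by linear_combination h₂ - 2 * h₁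
  exact (mul_eq_zero.mp h).resolve_left two_ne_zero

theorem eq_of_sqNorm_add_eq_four_mul {w z : R × R} (hw : sqNorm w ≠ 0)
    (hz : sqNorm z = sqNorm w) (hwz : sqNorm (w + z) = 4 * sqNorm w) : z = w := by
  have hiso : sqNorm (z - w) = 0 := by
    simp only [sqNorm, Prod.fst_add, Prod.snd_add, Prod.fst_sub, Prod.snd_sub] at hz hwz ⊢
    linear_combination 2 * hz - hwz
  refine sub_eq_zero.mp (eq_zero_of_sqNorm_add_eq hw hiso ?_)
  rwa [add_sub_cancel]

end SqNorm

def IsRatSq (v : ℝ × ℝ) : Prop := ∃ q : ℚ, 0 < q ∧ sqNorm v = q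

theorem exists_isRatSq_add_eq (z : ℝ × ℝ) : ∃ u v, IsRatSq u ∧ IsRatSq v ∧ u + v = z := by
  by_cases hz : z = 0
  · exact ⟨(1, 0), (-1, 0), ⟨1, one_pos, by norm_num [sqNorm]⟩, ⟨1, one_pos, by norm_num [sqNorm]⟩,
      by simp [hz]⟩
  have hn : 0 < sqNorm z := by
    have : z.1 ≠ 0 ∨ z.2 ≠ 0 := by
      by_contra! h
      exact hz (Prod.ext h.1 h.2)
    unfold sqNorm
    rcases this with h | h <;> positivity
  obtain ⟨q, hq⟩ := exists_rat_gt (sqNorm z / 4)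
  -- `u = z / 2 + t • z⊥`, with `t` chosen so that `|u|² = |z - u|² = |z|² / 4 + t² |z|² = q`
  set t := Real.sqrt ((q - sqNorm z / 4) / sqNorm z)
  have ht : t ^ 2 * sqNorm z = q - sqNorm z / 4 := by
    rw [Real.sq_sqrt (div_nonneg (by linarith) hn.le), div_mul_cancel₀ _ hn.ne']
  have hq₀ : (0 : ℝ) < q := by linarith
  refine ⟨(z.1 / 2 - t * z.2, z.2 / 2 + t * z.1), (z.1 / 2 + t * z.2, z.2 / 2 - t * z.1),
    ⟨q, by exact_mod_cast hq₀, ?_⟩, ⟨q, by exact_mod_cast hq₀, ?_⟩, ?_⟩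
  · simp only [sqNorm] at ht ⊢
    linear_combination ht
  · simp only [sqNorm] at ht ⊢
    linear_combination ht
  · ext <;> simp only [Prod.fst_add, Prod.snd_add] <;> ring

def PreservesRatSqDist {F : Type*} [Field F] (f : ℝ × ℝ → F × F) : Prop :=
  ∀ x v : ℝ × ℝ, ∀ q : ℚ, 0 < q → sqNorm v = q → sqNorm (f (x + v) - f x) = q

namespace PreservesRatSqDist

variable {F : Type*} [Field F] [CharZero F] {f : ℝ × ℝ → F × F}

theorem sqNorm_map_add_sub_ne_zero (hf : PreservesRatSqDist f) {v : ℝ × ℝ} {q : ℚ} (hq : 0 < q)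
    (hv : sqNorm v = q) (x : ℝ × ℝ) : sqNorm (f (x + v) - f x) ≠ 0 := by
  rw [hf x v q hq hv]
  exact_mod_cast hq.ne'

theorem map_add_add_self_sub {w : ℝ × ℝ} (hf : PreservesRatSqDist f) (hw : IsRatSq w)
    (x : ℝ × ℝ) : f (x + w + w) - f (x + w) = f (x + w) - f x := by
  obtain ⟨q, hq, hwq⟩ := hw
  have hww : sqNorm (w + w) = (4 * q : ℚ) := by
    simp only [sqNorm, Prod.fst_add, Prod.snd_add] at hwq ⊢
    push_cast
    linear_combination 4 * hwq
  apply eq_of_sqNorm_add_eq_four_mul (hf.sqNorm_map_add_sub_ne_zero hq hwq x)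
  · rw [hf _ w q hq hwq, hf x w q hq hwq]
  · rw [show f (x + w) - f x + (f (x + w + w) - f (x + w)) = f (x + (w + w)) - f x by
      rw [add_assoc]; abel, hf x _ _ (by positivity) hww, hf x w q hq hwq]
    push_cast; ring

theorem map_add_add_sub_map_add_of_isRatSq {u v : ℝ × ℝ} (hf : PreservesRatSqDist f)
    (hu : IsRatSq u) (hv : IsRatSq v) (x : ℝ × ℝ) :
    f (x + v + u) - f (x + v) = f (x + u) - f x := by
  obtain ⟨q, hq, huq⟩ := hu
  have h₀ := hf.map_add_add_self_sub hv x
  have h₁ := hf.map_add_add_self_sub hv (x + u)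
  simp only [add_right_comm _ u v] at h₁
  set b := f (x + u) - f x
  set e := f (x + v + u) - f (x + v) - b
  have hbe : b + e = f (x + v + u) - f (x + v) := add_sub_cancel b _
  have hbee : b + e + e = f (x + v + v + u) - f (x + v + v) := by linear_combination h₀ - h₁
  have he : e = 0 := eq_zero_of_sqNorm_add_add_eq (hf.sqNorm_map_add_sub_ne_zero hq huq x)
    (by rw [hbe, hf _ u q hq huq, hf x u q hq huq])
    (by rw [hbee, hf _ u q hq huq, hf x u q hq huq])
  exact sub_eq_zero.mp he

theorem map_add_add_sub_map_add_of_isRatSq_left {u : ℝ × ℝ} (hf : PreservesRatSqDist f)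
    (hu : IsRatSq u) (x z : ℝ × ℝ) : f (x + u + z) - f (x + u) = f (x + z) - f x := by
  obtain ⟨v₁, v₂, hv₁, hv₂, rfl⟩ := exists_isRatSq_add_eq z
  have h₁ := hf.map_add_add_sub_map_add_of_isRatSq hv₁ hu x
  have h₂ := hf.map_add_add_sub_map_add_of_isRatSq hv₂ hu (x + v₁)
  simp only [add_right_comm _ u v₁, ← add_assoc] at h₁ h₂ ⊢
  linear_combination h₁ + h₂

theorem map_add_add_sub_map_add (hf : PreservesRatSqDist f) (x s z : ℝ × ℝ) :
    f (x + s + z) - f (x + s) = f (x + z) - f x := by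
  obtain ⟨u₁, u₂, hu₁, hu₂, rfl⟩ := exists_isRatSq_add_eq s
  have h₁ := hf.map_add_add_sub_map_add_of_isRatSq_left hu₁ x z
  have h₂ := hf.map_add_add_sub_map_add_of_isRatSq_left hu₂ (x + u₁) z
  simp only [← add_assoc] at h₁ h₂ ⊢
  linear_combination h₁ + h₂

end PreservesRatSqDist

theorem preservesRatSqDist_of_preserves_dist {F : Type*} [Field F] [Algebra ℝ F]
    (f : ℝ × ℝ → F × F)
    (hf : ∀ d : ℝ, 0 < d → (∃ q : ℚ, (q : ℝ) = d ^ 2) →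
      ∀ x y : ℝ × ℝ, Real.sqrt ((x.1 - y.1) ^ 2 + (x.2 - y.2) ^ 2) = d →
        ((f x).1 - (f y).1) ^ 2 + ((f x).2 - (f y).2) ^ 2 = algebraMap ℝ F (d ^ 2)) :
    PreservesRatSqDist f := by
  intro x v q hq hv
  have hq' : (0 : ℝ) < q := by exact_mod_cast hq
  have hsq : Real.sqrt q ^ 2 = q := Real.sq_sqrt hq'.le
  have h := hf (Real.sqrt q) (Real.sqrt_pos.mpr hq') ⟨q, hsq.symm⟩ (x + v) x
    (by simp only [Prod.fst_add, Prod.snd_add, add_sub_cancel_left]; rw [← sqNorm, hv])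
  rwa [hsq, map_ratCast] at h

/-- `f : ℝ² → 𝔽²` preserves every distance `d > 0` with `d²` rational
(`|x-y| = d` implies `φ (f x) (f y) = d²`). -/
theorem stmt_9 {F : Type*} [Field F] [Algebra ℝ F]
    (f : ℝ × ℝ → F × F)
    (hf : ∀ d : ℝ, 0 < d → (∃ q : ℚ, (q : ℝ) = d ^ 2) →
      ∀ x y : ℝ × ℝ, Real.sqrt ((x.1 - y.1) ^ 2 + (x.2 - y.2) ^ 2) = d →
        ((f x).1 - (f y).1) ^ 2 + ((f x).2 - (f y).2) ^ 2 = algebraMap ℝ F (d ^ 2))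
    (A B C D : ℝ × ℝ) (h : B - A = D - C) :
    f B - f A = f D - f C := by
  have : CharZero F := charZero_of_injective_algebraMap (algebraMap ℝ F).injective
  have key := (preservesRatSqDist_of_preserves_dist f hf).map_add_add_sub_map_add A (C - A) (B - A)
  rwa [add_sub_cancel, add_sub_cancel, h, add_sub_cancel, eq_comm] at key
end

section
/- Suppose f : ℝ² → 𝔽² preserves every distance d > 0 with d² rational. If A, B, C, D ∈ ℝ² and the vectors B - A and D - C are linearly dependent over ℝ, then f(B) - f(A) and f(D) - f(C) are linearly dependent over 𝔽. -/
/-!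
Write `q(x, y) = x² + y²` on `𝔽²`. If `q a ≠ 0`, a vector `d` with `q d = 0` and `a · d = 0`
vanishes (Lagrange's identity). Applied to rhombi with rational squared sides, this shows that
`f (P + z) - f P` does not depend on `P`, so `U = f - f 0` is additive, hence `ℚ`-linear, and
preserves `q` on vectors of rational squared length.

Fix a unit vector `w`. Auxiliary points off the line `ℝ w` with rational squared distances give
`U (t w) · U (t⁻¹ w) = 1` and show that these two vectors are parallel, so
`U (t⁻¹ w) = q (U (t w))⁻¹ U (t w)`. Inverting along rational shifts of `t` yields the cubic law
`U (t³ w) = q (U (t w)) U (t w)`, and comparing it at `s`, `s + 1`, `s + 2` forces `U (s w)` to be a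
multiple of `U w`.
-/

lemma not_linearIndependent_smul_pair {K M : Type*} [Field K] [AddCommGroup M] [Module K M]
    (x : M) (a b : K) : ¬ LinearIndependent K ![a • x, b • x] := by
  rw [LinearIndependent.pair_iff]
  push Not
  rcases eq_or_ne a 0 with rfl | ha
  · exact ⟨1, 0, by simp, by simp⟩
  · refine ⟨b, -a, ?_, fun _ ↦ neg_ne_zero.mpr ha⟩
    rw [smul_smul, smul_smul, ← add_smul, mul_comm b a, neg_mul, add_neg_cancel, zero_smul]

lemma exists_eq_smul_of_not_linearIndependent_pair {K M : Type*} [DivisionRing K]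
    [AddCommGroup M] [Module K M] {x y : M} (h : ¬ LinearIndependent K ![x, y]) :
    ∃ (v : M) (a b : K), x = a • v ∧ y = b • v := by
  rw [linearIndependent_fin2] at h
  simp only [Matrix.cons_val_one, Matrix.cons_val_zero, not_and_or, not_not, not_forall] at h
  rcases h with hy | ⟨a, hx⟩
  · exact ⟨x, 1, 0, by simp, by simp [hy]⟩
  · exact ⟨y, a, 1, hx.symm, by simp⟩

namespace Plane

section Algebra

variable {R : Type*} [CommRing R]

def normSq (v : R × R) : R := v.1 ^ 2 + v.2 ^ 2

def dot (v w : R × R) : R := v.1 * w.1 + v.2 * w.2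

def cross (v w : R × R) : R := v.1 * w.2 - v.2 * w.1

def rot (v : R × R) : R × R := (-v.2, v.1)

lemma normSq_add (v w : R × R) : normSq (v + w) = normSq v + normSq w + 2 * dot v w := by
  simp only [normSq, dot, Prod.fst_add, Prod.snd_add]; ring

lemma normSq_sub (v w : R × R) : normSq (v - w) = normSq v + normSq w - 2 * dot v w := by
  simp only [normSq, dot, Prod.fst_sub, Prod.snd_sub]; ring

lemma normSq_smul (c : R) (v : R × R) : normSq (c • v) = c ^ 2 * normSq v := by
  simp only [normSq, Prod.smul_fst, Prod.smul_snd, smul_eq_mul]; ring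

lemma dot_add_sub (v w : R × R) : dot (v + w) (v - w) = normSq v - normSq w := by
  simp only [normSq, dot, Prod.fst_add, Prod.snd_add, Prod.fst_sub, Prod.snd_sub]; ring

lemma dot_add_right (u v w : R × R) : dot u (v + w) = dot u v + dot u w := by
  simp only [dot, Prod.fst_add, Prod.snd_add]; ring

lemma dot_sub_right (u v w : R × R) : dot u (v - w) = dot u v - dot u w := by
  simp only [dot, Prod.fst_sub, Prod.snd_sub]; ring

lemma dot_self (v : R × R) : dot v v = normSq v := by
  simp only [dot, normSq]; ring

lemma cross_sq (v w : R × R) : cross v w ^ 2 = normSq v * normSq w - dot v w ^ 2 := by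
  simp only [cross, normSq, dot]; ring

lemma normSq_smul_eq (v w : R × R) : normSq v • w = dot v w • v + cross v w • rot v := by
  ext <;> simp only [normSq, dot, cross, rot, Prod.smul_fst, Prod.smul_snd, Prod.fst_add,
    Prod.snd_add, smul_eq_mul] <;> ring

lemma cross_smul_eq (u v w : R × R) : cross u v • w = dot v w • rot u - dot u w • rot v := by
  ext <;> simp only [dot, cross, rot, Prod.smul_fst, Prod.smul_snd, Prod.fst_sub,
    Prod.snd_sub, smul_eq_mul] <;> ring

lemma normSq_smul_add_smul_rot (a b : R) (v : R × R) :
    normSq (a • v + b • rot v) = (a ^ 2 + b ^ 2) * normSq v := by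
  simp only [normSq, rot, Prod.smul_fst, Prod.smul_snd, Prod.fst_add, Prod.snd_add,
    smul_eq_mul]; ring

end Algebra

section Field

variable {F : Type*} [Field F]

lemma eq_zero_of_normSq_eq_zero_of_dot_eq_zero {v w : F × F} (hv : normSq v ≠ 0)
    (hw : normSq w = 0) (hvw : dot v w = 0) : w = 0 := by
  have hcross : cross v w = 0 := by
    simpa [hw, hvw] using cross_sq v w
  simpa [hcross, hvw, hv] using normSq_smul_eq v w

lemma cross_eq_zero_of_dot_eq_zero {u v w : F × F} (hw : w ≠ 0) (hu : dot u w = 0)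
    (hv : dot v w = 0) : cross u v = 0 := by
  simpa [hu, hv, hw] using cross_smul_eq u v w

variable [CharZero F]

lemma eq_of_normSq_add_eq {v w : F × F} {r : F} (hr : r ≠ 0) (hv : normSq v = r)
    (hw : normSq w = r) (hvw : normSq (v + w) = 4 * r) : v = w := by
  have hdot : dot v w = r := by
    rw [normSq_add, hv, hw] at hvw; linear_combination hvw / 2
  rw [← sub_eq_zero]
  refine eq_zero_of_normSq_eq_zero_of_dot_eq_zero (hv ▸ hr) ?_ ?_
  · rw [normSq_sub, hv, hw, hdot]; ring
  · rw [dot_sub_right, dot_self, hv, hdot, sub_self]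

lemma eq_zero_of_normSq_add_eq_of_normSq_sub_eq {v w : F × F} (hv : normSq v ≠ 0)
    (hadd : normSq (v + w) = normSq v) (hsub : normSq (v - w) = normSq v) : w = 0 := by
  rw [normSq_add] at hadd
  rw [normSq_sub] at hsub
  exact eq_zero_of_normSq_eq_zero_of_dot_eq_zero hv (by linear_combination (hadd + hsub) / 2)
    (by linear_combination (hadd - hsub) / 4)

lemma dot_sub_eq_zero_of_normSq_sub_sub_eq {x y₁ y₂ : F × F}
    (h : normSq (x - y₁) - normSq y₁ = normSq (x - y₂) - normSq y₂) : dot x (y₁ - y₂) = 0 := by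
  rw [normSq_sub, normSq_sub] at h
  rw [dot_sub_right]; linear_combination h / (-2)

end Field

section Real

lemma normSq_pos {v : ℝ × ℝ} (hv : v ≠ 0) : 0 < normSq v := by
  rcases v with ⟨a, b⟩
  have : a ≠ 0 ∨ b ≠ 0 := by
    by_contra! h
    exact hv (by rw [h.1, h.2]; rfl)
  unfold normSq
  rcases this with h | h <;> positivity

/-- The point `((t + t⁻¹) / 2) • w + s • rot w` lies on the perpendicular bisector of `t • w` and
`t⁻¹ • w`, and its squared distance to them is one less than its squared norm. -/
lemma normSq_smul_sub_bisector {w : ℝ × ℝ} (hw : normSq w = 1) {t : ℝ} (ht : t ≠ 0) (s : ℝ) :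
    normSq (t • w - (((t + t⁻¹) / 2) • w + s • rot w)) = ((t + t⁻¹) / 2) ^ 2 + s ^ 2 - 1 := by
  rw [show t • w - (((t + t⁻¹) / 2) • w + s • rot w) = ((t - t⁻¹) / 2) • w + (-s) • rot w by
    module, normSq_smul_add_smul_rot, hw]
  field_simp; ring

lemma exists_rat_normSq_eq_normSq_sub (v : ℝ × ℝ) :
    ∃ ρ : ℚ, 0 < ρ ∧ ∃ a : ℝ × ℝ, normSq a = ρ ∧ normSq (v - a) = ρ := by
  rcases eq_or_ne v 0 with rfl | hv
  · exact ⟨1, one_pos, (1, 0), by simp [normSq], by simp [normSq]⟩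
  have hv' := normSq_pos hv
  obtain ⟨ρ, hρ⟩ := exists_rat_gt (normSq v / 4)
  set s := √(ρ / normSq v - 1 / 4)
  have hs : s ^ 2 = ρ / normSq v - 1 / 4 :=
    Real.sq_sqrt (by rw [sub_nonneg, le_div_iff₀ hv']; linarith)
  refine ⟨ρ, by exact_mod_cast (by positivity : (0 : ℝ) < normSq v / 4).trans hρ,
    (1 / 2 : ℝ) • v + s • rot v, ?_, ?_⟩
  · rw [normSq_smul_add_smul_rot, hs]; field_simp; ring
  · rw [show v - ((1 / 2 : ℝ) • v + s • rot v) = (1 / 2 : ℝ) • v + (-s) • rot v by module,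
      normSq_smul_add_smul_rot, neg_sq, hs]
    field_simp; ring

end Real

def PreservesRatSqDist {F : Type*} [Field F] (f : ℝ × ℝ → F × F) : Prop :=
  ∀ (x y : ℝ × ℝ) (ρ : ℚ), normSq (x - y) = ρ → normSq (f x - f y) = ρ

namespace PreservesRatSqDist

variable {F : Type*} [Field F] {f : ℝ × ℝ → F × F} {U : ℝ × ℝ →+ F × F} {w : ℝ × ℝ}

lemma normSq_map (hU : PreservesRatSqDist U) {z : ℝ × ℝ} {ρ : ℚ} (hz : normSq z = ρ) :
    normSq (U z) = ρ := by
  simpa using hU z 0 ρ (by simpa using hz)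

variable [CharZero F]

lemma add_sub_eq_sub_sub (hf : PreservesRatSqDist f) {z : ℝ × ℝ} {ρ : ℚ} (hρ : 0 < ρ)
    (hz : normSq z = ρ) (P : ℝ × ℝ) :
    f (P + z) - f P = f P - f (P - z) := by
  refine eq_of_normSq_add_eq (r := (ρ : F)) (by exact_mod_cast hρ.ne')
    (hf _ _ _ (by rwa [add_sub_cancel_left])) (hf _ _ _ (by rwa [sub_sub_cancel])) ?_
  rw [sub_add_sub_cancel, show (4 * ρ : F) = ((4 * ρ : ℚ) : F) by push_cast; ring]
  refine hf _ _ _ ?_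
  rw [show P + z - (P - z) = (2 : ℝ) • z by module, normSq_smul, hz]; push_cast; ring

lemma add_sub_eq_of_normSq_sub (hf : PreservesRatSqDist f) {z : ℝ × ℝ} {ρ : ℚ} (hρ : 0 < ρ)
    (hz : normSq z = ρ) {P Q : ℝ × ℝ} {ρ' : ℚ} (hρ' : 0 < ρ') (hPQ : normSq (Q - P) = ρ') :
    f (Q + z) - f Q = f (P + z) - f P := by
  have hQP := hf Q P ρ' hPQ
  rw [← sub_eq_zero]
  refine eq_zero_of_normSq_add_eq_of_normSq_sub_eq (v := f Q - f P)
    (by rw [hQP]; exact_mod_cast hρ'.ne') ?_ ?_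
  · rw [hQP, show f Q - f P + (f (Q + z) - f Q - (f (P + z) - f P)) = f (Q + z) - f (P + z) by
      abel]
    exact hf _ _ _ (by rwa [add_sub_add_right_eq_sub])
  · rw [hQP, show f Q - f P - (f (Q + z) - f Q - (f (P + z) - f P)) = f (Q - z) - f (P - z) by
      linear_combination (exp := 1)
        hf.add_sub_eq_sub_sub hρ hz P - hf.add_sub_eq_sub_sub hρ hz Q]
    exact hf _ _ _ (by rwa [sub_sub_sub_cancel_right])

lemma add_sub_eq (hf : PreservesRatSqDist f) {z : ℝ × ℝ} {ρ : ℚ} (hρ : 0 < ρ)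
    (hz : normSq z = ρ) (P Q : ℝ × ℝ) :
    f (Q + z) - f Q = f (P + z) - f P := by
  obtain ⟨κ, hκ, a, ha, hQa⟩ := exists_rat_normSq_eq_normSq_sub (Q - P)
  calc f (Q + z) - f Q = f (P + a + z) - f (P + a) :=
        hf.add_sub_eq_of_normSq_sub hρ hz hκ (by rwa [sub_add_eq_sub_sub])
    _ = f (P + z) - f P := hf.add_sub_eq_of_normSq_sub hρ hz hκ (by rwa [add_sub_cancel_left])

lemma map_add_sub (hf : PreservesRatSqDist f) (P z : ℝ × ℝ) : f (P + z) - f P = f z - f 0 := by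
  obtain ⟨ρ, hρ, a, ha, hza⟩ := exists_rat_normSq_eq_normSq_sub z
  have h₁ := hf.add_sub_eq hρ hza (P + a) a
  have h₂ := hf.add_sub_eq hρ ha P 0
  rw [add_sub_cancel, add_assoc, add_sub_cancel] at h₁
  rw [zero_add] at h₂
  linear_combination (exp := 1) -h₁ - h₂

def toAddMonoidHom (hf : PreservesRatSqDist f) : ℝ × ℝ →+ F × F :=
  AddMonoidHom.mk' (fun z ↦ f z - f 0) fun y z ↦ by
    linear_combination (exp := 1) hf.map_add_sub y z

lemma toAddMonoidHom_apply (hf : PreservesRatSqDist f) (z : ℝ × ℝ) :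
    hf.toAddMonoidHom z = f z - f 0 :=
  rfl

lemma map_sub_map (hf : PreservesRatSqDist f) (x y : ℝ × ℝ) :
    f y - f x = hf.toAddMonoidHom (y - x) := by
  rw [toAddMonoidHom_apply, ← hf.map_add_sub x, add_sub_cancel]

lemma toAddMonoidHom_preservesRatSqDist (hf : PreservesRatSqDist f) :
    PreservesRatSqDist hf.toAddMonoidHom := fun x y ρ h ↦ by
  simpa only [toAddMonoidHom_apply, sub_sub_sub_cancel_right] using hf x y ρ h

lemma dot_map_smul_map_inv_smul (hU : PreservesRatSqDist U) (hw : normSq w = 1) {t : ℝ}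
    (ht : t ≠ 0) : dot (U (t • w)) (U (t⁻¹ • w)) = 1 := by
  set ξ := (t + t⁻¹) / 2
  have key : ∀ (s : ℝ) (Q : ℚ), ξ ^ 2 + s ^ 2 = Q →
      dot (U (t • w)) (U (t⁻¹ • w) + U ((2 * s) • rot w)) = 1 := by
    intro s Q hs
    set p := ξ • w + s • rot w
    have hp : normSq (U p) = Q :=
      hU.normSq_map (by rw [normSq_smul_add_smul_rot, hw, mul_one, hs])
    have hq : normSq (U (t • w - p)) = ((Q - 1 : ℚ) : F) :=
      hU.normSq_map (by rw [normSq_smul_sub_bisector hw ht, hs]; push_cast; ring)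
    have hsum : U (t • w) = U p + U (t • w - p) := by rw [← map_add, add_sub_cancel]
    have hdiff : U (t⁻¹ • w) + U ((2 * s) • rot w) = U p - U (t • w - p) := by
      rw [← map_add, ← map_sub]; congr 1; simp only [p, ξ]; module
    rw [hsum, hdiff, dot_add_sub, hp, hq]; push_cast; ring
  obtain ⟨Q, hQ⟩ := exists_rat_gt (ξ ^ 2)
  have hs : ξ ^ 2 + √(Q - ξ ^ 2) ^ 2 = Q := by rw [Real.sq_sqrt (by linarith)]; ring
  have h₁ := key _ Q hs
  have h₂ := key (-√(Q - ξ ^ 2)) Q (by rwa [neg_sq])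
  rw [mul_neg, neg_smul, map_neg, ← sub_eq_add_neg] at h₂
  rw [dot_add_right] at h₁
  rw [dot_sub_right] at h₂
  linear_combination (h₁ + h₂) / 2

lemma cross_map_smul_map_inv_smul (hU : PreservesRatSqDist U) (hw : normSq w = 1) {t : ℝ}
    (ht : t ≠ 0) : cross (U (t • w)) (U (t⁻¹ • w)) = 0 := by
  have hξ : (t⁻¹ + t⁻¹⁻¹) / 2 = (t + t⁻¹) / 2 := by rw [inv_inv, add_comm]
  have hY : ∀ Q : ℚ, ((t + t⁻¹) / 2) ^ 2 < Q → ∃ Y : ℝ × ℝ, normSq (U Y) = Q ∧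
      normSq (U (t • w) - U Y) - normSq (U Y) = -1 ∧
      normSq (U (t⁻¹ • w) - U Y) - normSq (U Y) = -1 := by
    intro Q hQ
    set s := √(Q - ((t + t⁻¹) / 2) ^ 2)
    have hs : ((t + t⁻¹) / 2) ^ 2 + s ^ 2 = Q := by rw [Real.sq_sqrt (by linarith)]; ring
    have hY : normSq (U (((t + t⁻¹) / 2) • w + s • rot w)) = Q :=
      hU.normSq_map (by rw [normSq_smul_add_smul_rot, hw, mul_one, hs])
    refine ⟨_, hY, ?_, ?_⟩ <;> rw [← map_sub, hY, hU.normSq_map (ρ := Q - 1)]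
    · push_cast; ring
    · rw [normSq_smul_sub_bisector hw ht, hs]; push_cast; ring
    · push_cast; ring
    · rw [← hξ, normSq_smul_sub_bisector hw (inv_ne_zero ht), hξ, hs]; push_cast; ring
  obtain ⟨Q, hQ⟩ := exists_rat_gt (((t + t⁻¹) / 2) ^ 2)
  obtain ⟨Y₁, hY₁, h₁, h₁'⟩ := hY Q hQ
  obtain ⟨Y₂, hY₂, h₂, h₂'⟩ := hY (Q + 1) (by push_cast; linarith)
  have hne : U Y₁ - U Y₂ ≠ 0 := by
    rw [sub_ne_zero]
    intro h
    rw [h, hY₂] at hY₁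
    exact (lt_add_one Q).ne' (by exact_mod_cast hY₁)
  exact cross_eq_zero_of_dot_eq_zero hne
    (dot_sub_eq_zero_of_normSq_sub_sub_eq (h₁.trans h₂.symm))
    (dot_sub_eq_zero_of_normSq_sub_sub_eq (h₁'.trans h₂'.symm))

lemma normSq_map_smul_smul_map_inv_smul (hU : PreservesRatSqDist U) (hw : normSq w = 1)
    {t : ℝ} (ht : t ≠ 0) : normSq (U (t • w)) • U (t⁻¹ • w) = U (t • w) := by
  rw [normSq_smul_eq, hU.dot_map_smul_map_inv_smul hw ht, hU.cross_map_smul_map_inv_smul hw ht,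
    one_smul, zero_smul, add_zero]

lemma normSq_map_smul_ne_zero (hU : PreservesRatSqDist U) (hw : normSq w = 1) {t : ℝ}
    (ht : t ≠ 0) : normSq (U (t • w)) ≠ 0 := by
  intro h
  have hdot := hU.dot_map_smul_map_inv_smul hw ht
  rw [← hU.normSq_map_smul_smul_map_inv_smul hw ht, h, zero_smul] at hdot
  simp [dot] at hdot

lemma map_inv_smul (hU : PreservesRatSqDist U) (hw : normSq w = 1) {t : ℝ} (ht : t ≠ 0) :
    U (t⁻¹ • w) = (normSq (U (t • w)))⁻¹ • U (t • w) :=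
  (eq_inv_smul_iff₀ (hU.normSq_map_smul_ne_zero hw ht)).mpr
    (hU.normSq_map_smul_smul_map_inv_smul hw ht)

lemma map_add_rat_mul_inv_smul (hU : PreservesRatSqDist U) (hw : normSq w = 1) {t : ℝ}
    (ht : t ≠ 0) (c : ℚ) :
    U ((t + c * t⁻¹) • w) = ((normSq (U (t • w)))⁻¹ * (normSq (U (t • w)) + c)) • U (t • w) := by
  have hΦ := hU.normSq_map_smul_ne_zero hw ht
  rw [add_smul, map_add, mul_smul, map_ratCast_smul U ℝ F, hU.map_inv_smul hw ht, smul_smul,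
    ← show 1 + (c : F) * (normSq (U (t • w)))⁻¹ =
      (normSq (U (t • w)))⁻¹ * (normSq (U (t • w)) + c) by field_simp, add_smul, one_smul]

lemma normSq_map_smul_add_ne_zero (hU : PreservesRatSqDist U) (hw : normSq w = 1) {t : ℝ}
    (ht : t ≠ 0) {c : ℚ} (hc : 0 < c) : normSq (U (t • w)) + c ≠ 0 := by
  have hr : t + c * t⁻¹ ≠ 0 := by
    rw [show t + c * t⁻¹ = (t ^ 2 + c) / t by field_simp]
    exact div_ne_zero (by positivity) ht
  have h := hU.normSq_map_smul_ne_zero hw hr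
  rw [hU.map_add_rat_mul_inv_smul hw ht, normSq_smul] at h
  intro h0
  apply h
  rw [h0, mul_zero, zero_pow two_ne_zero, zero_mul]

lemma map_div_smul (hU : PreservesRatSqDist U) (hw : normSq w = 1) {t : ℝ} (ht : t ≠ 0)
    {c : ℚ} (hc : 0 < c) :
    U ((t / (t ^ 2 + c)) • w) = (normSq (U (t • w)) + c)⁻¹ • U (t • w) := by
  have hΦ := hU.normSq_map_smul_ne_zero hw ht
  have hΦc := hU.normSq_map_smul_add_ne_zero hw ht hc
  have hr : t + c * t⁻¹ = (t / (t ^ 2 + c))⁻¹ := by field_simp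
  rw [← inv_inv (t / (t ^ 2 + c)), ← hr, hU.map_inv_smul hw (hr ▸ inv_ne_zero (by positivity)),
    hU.map_add_rat_mul_inv_smul hw ht, normSq_smul, smul_smul]
  congr 1
  field_simp

lemma map_pow_three_smul (hU : PreservesRatSqDist U) (hw : normSq w = 1) (t : ℝ) :
    U ((t ^ 3) • w) = normSq (U (t • w)) • U (t • w) := by
  rcases eq_or_ne t 0 with rfl | ht
  · simp
  have hΦ := hU.normSq_map_smul_ne_zero hw ht
  have hΦ₁ := hU.normSq_map_smul_add_ne_zero hw ht (c := 1) one_pos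
  have hΦ₂ := hU.normSq_map_smul_add_ne_zero hw ht (c := 2) two_pos
  have h₁ := hU.map_div_smul hw ht (c := 1) one_pos
  have h₂ := hU.map_div_smul hw ht (c := 2) two_pos
  push_cast at hΦ₁ hΦ₂ h₁ h₂
  set Φ := normSq (U (t • w))
  -- `ζ = t / ((t ^ 2 + 1) * (t ^ 2 + 2))`: by partial fractions `U (ζ • w)` is a multiple of
  -- `U (t • w)`, while `ζ⁻¹ = t ^ 3 + 3 * t + 2 * t⁻¹`.
  set ζ := t / (t ^ 2 + 1) - t / (t ^ 2 + 2)
  have hζ : ζ ≠ 0 := by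
    rw [show ζ = t / ((t ^ 2 + 1) * (t ^ 2 + 2)) by simp only [ζ]; field_simp; ring]
    positivity
  have hUζ : U (ζ • w) = ((Φ + 1) * (Φ + 2))⁻¹ • U (t • w) := by
    rw [sub_smul, map_sub, h₁, h₂, ← sub_smul]
    congr 1
    field_simp
    ring
  have hζinv : ζ⁻¹ = t ^ 3 + ((3 : ℚ) : ℝ) * t + ((2 : ℚ) : ℝ) * t⁻¹ := by
    simp only [ζ]; field_simp; ring
  have h := hU.map_inv_smul hw hζ
  rw [hζinv, hUζ, normSq_smul, smul_smul, add_smul, add_smul, map_add, map_add, mul_smul,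
    mul_smul, map_ratCast_smul U ℝ F, map_ratCast_smul U ℝ F, hU.map_inv_smul hw ht,
    smul_smul] at h
  have hcoef : ((((Φ + 1) * (Φ + 2))⁻¹) ^ 2 * Φ)⁻¹ * ((Φ + 1) * (Φ + 2))⁻¹ =
      Φ + 3 + 2 * Φ⁻¹ := by
    field_simp
    ring
  rw [hcoef] at h
  push_cast at h
  linear_combination (norm := module) h

lemma map_smul_eq_dot_smul (hU : PreservesRatSqDist U) (hw : normSq w = 1) (s : ℝ) :
    U (s • w) = dot (U (s • w)) (U w) • U w := by
  have hu : normSq (U w) = 1 := by simpa using hU.normSq_map (ρ := 1) (by simpa using hw)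
  have hshift : ∀ k : ℚ, U ((s + k) • w) = U (s • w) + (k : F) • U w := fun k ↦ by
    rw [add_smul, map_add, map_ratCast_smul U ℝ F]
  have hcube : ∀ k : ℚ, U ((s + k) ^ 3 • w) = U (s ^ 3 • w) + ((3 * k : ℚ) : F) • U (s ^ 2 • w) +
      ((3 * k ^ 2 : ℚ) : F) • U (s • w) + ((k ^ 3 : ℚ) : F) • U w := fun k ↦ by
    rw [show (s + k) ^ 3 = s ^ 3 + ((3 * k : ℚ) : ℝ) * s ^ 2 + ((3 * k ^ 2 : ℚ) : ℝ) * s +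
      ((k ^ 3 : ℚ) : ℝ) * 1 by push_cast; ring]
    simp only [add_smul, mul_smul, map_add, map_ratCast_smul U ℝ F, one_smul]
  have h₀ := hU.map_pow_three_smul hw s
  have h₁ := hU.map_pow_three_smul hw (s + (1 : ℚ))
  have h₂ := hU.map_pow_three_smul hw (s + (2 : ℚ))
  rw [hcube, hshift] at h₁ h₂
  rw [h₀] at h₁ h₂
  simp only [normSq, dot, Prod.ext_iff, Prod.fst_add, Prod.snd_add, Prod.smul_fst,
    Prod.smul_snd, smul_eq_mul] at hu h₁ h₂ ⊢
  push_cast at h₁ h₂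
  -- `h₂ / 4 - h₁ / 2` eliminates `U (s ^ 2 • w)`; with `normSq (U w) = 1` the claim remains.
  constructor
  · linear_combination (-1 / 2 : F) * h₁.1 + (1 / 4 : F) * h₂.1 +
      ((U (s • w)).1 + 3 * (U w).1) / 2 * hu
  · linear_combination (-1 / 2 : F) * h₁.2 + (1 / 4 : F) * h₂.2 +
      ((U (s • w)).2 + 3 * (U w).2) / 2 * hu

lemma not_linearIndependent_map_smul (hU : PreservesRatSqDist U) (v : ℝ × ℝ) (a b : ℝ) :
    ¬ LinearIndependent F ![U (a • v), U (b • v)] := by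
  rcases eq_or_ne v 0 with rfl | hv
  · simpa using LinearIndependent.ne_zero (R := F) (v := ![(0 : F × F), 0]) 0
  set L := √(normSq v)
  have hL : 0 < L := Real.sqrt_pos.mpr (normSq_pos hv)
  have hw : normSq (L⁻¹ • v) = 1 := by
    rw [normSq_smul, inv_pow, Real.sq_sqrt (normSq_pos hv).le,
      inv_mul_cancel₀ (normSq_pos hv).ne']
  have hv : ∀ c : ℝ, c • v = (c * L) • L⁻¹ • v := fun c ↦ by
    rw [smul_smul, mul_assoc, mul_inv_cancel₀ hL.ne', mul_one]
  rw [hv a, hv b, hU.map_smul_eq_dot_smul hw, hU.map_smul_eq_dot_smul hw (b * L)]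
  exact not_linearIndependent_smul_pair _ _ _

end PreservesRatSqDist

lemma preservesRatSqDist_of_forall_sqrt_eq {F : Type*} [Field F] [Algebra ℝ F]
    {f : ℝ × ℝ → F × F}
    (hf : ∀ d : ℝ, 0 < d → (∃ q : ℚ, (q : ℝ) = d ^ 2) →
      ∀ x y : ℝ × ℝ, Real.sqrt ((x.1 - y.1) ^ 2 + (x.2 - y.2) ^ 2) = d →
        ((f x).1 - (f y).1) ^ 2 + ((f x).2 - (f y).2) ^ 2 = algebraMap ℝ F (d ^ 2)) :
    PreservesRatSqDist f := by
  intro x y ρ hρ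
  rcases eq_or_ne x y with rfl | hxy
  · rw [sub_self] at hρ ⊢
    have : (ρ : ℝ) = 0 := by rw [← hρ]; simp [normSq]
    simp [normSq, show ρ = 0 by exact_mod_cast this]
  have hpos := normSq_pos (sub_ne_zero.mpr hxy)
  have h := hf (√(normSq (x - y))) (Real.sqrt_pos.mpr hpos)
    ⟨ρ, by rw [Real.sq_sqrt hpos.le, hρ]⟩ x y rfl
  rw [Real.sq_sqrt hpos.le, hρ, map_ratCast] at h
  simpa [normSq] using h

end Plane

/-- `f : ℝ² → 𝔽²` preserves every distance `d > 0` with `d²` rational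
(`|x-y| = d` implies `φ (f x) (f y) = d²`). -/
theorem stmt_12 {F : Type*} [Field F] [Algebra ℝ F]
    (f : ℝ × ℝ → F × F)
    (hf : ∀ d : ℝ, 0 < d → (∃ q : ℚ, (q : ℝ) = d ^ 2) →
      ∀ x y : ℝ × ℝ, Real.sqrt ((x.1 - y.1) ^ 2 + (x.2 - y.2) ^ 2) = d →
        ((f x).1 - (f y).1) ^ 2 + ((f x).2 - (f y).2) ^ 2 = algebraMap ℝ F (d ^ 2))
    (A B C D : ℝ × ℝ) (h : ¬ LinearIndependent ℝ ![B - A, D - C]) :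
    ¬ LinearIndependent F ![f B - f A, f D - f C] := by
  have : CharZero F := charZero_of_injective_algebraMap (algebraMap ℝ F).injective
  have hf := Plane.preservesRatSqDist_of_forall_sqrt_eq hf
  obtain ⟨v, a, b, hBA, hDC⟩ := exists_eq_smul_of_not_linearIndependent_pair h
  rw [hf.map_sub_map, hf.map_sub_map, hBA, hDC]
  exact hf.toAddMonoidHom_preservesRatSqDist.not_linearIndependent_map_smul v a b
end
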